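/- arXiv:2512.21464 — 2 statements merged into one kernel-verified Lean document; each statement's English description precedes it below -/
import Mathlib

section
/- Let A, B ∈ ℝ^{n×n} be positive semidefinite. Then rank(B) = rank(√A·B·√A) + dim(range(B) ∩ ker(A)), where dim denotes the dimension of the subspace of ℝⁿ. (Equivalently, the rank of the A-Schur complement of B equals the dimension of range(B) ∩ ker(A), which equals rank(B) − rank(√A·B·√A).) -/
/-!
Write `S = √A`, a symmetric matrix with `ker S = ker A`. For psd `B`, `xᵀ S B S x = 0` forces
`B S x = 0`, so `S B S` and `B S` have the same kernel; hence
`rank (S B S) = rank (B S) = rank (S B) = dim S(range B)`. Rank–nullity for `S` restricted to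
`range B` then gives `rank B = dim S(range B) + dim (range B ∩ ker A)`.
-/

open Matrix

/-- The positive semidefinite square root of a psd matrix (junk value `0` otherwise). -/
noncomputable def psdSqrt {n : ℕ} (M : Matrix (Fin n) (Fin n) ℝ) : Matrix (Fin n) (Fin n) ℝ :=
  letI := Classical.propDecidable M.PosSemidef
  if h : M.PosSemidef then
    h.1.eigenvectorUnitary.1 * diagonal ((↑) ∘ (√·) ∘ h.1.eigenvalues) *
      (star h.1.eigenvectorUnitary : Matrix (Fin n) (Fin n) ℝ) else 0

/-- `trace √(√A·B·√A)`. -/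
noncomputable def sqrtTr {n : ℕ} (A B : Matrix (Fin n) (Fin n) ℝ) : ℝ :=
  (psdSqrt (psdSqrt A * B * psdSqrt A)).trace

/-- `T` is an optimal transport matrix from `A` to `B`. -/
def IsOT {n : ℕ} (A B T : Matrix (Fin n) (Fin n) ℝ) : Prop :=
  T * A * Tᵀ = B ∧ (A * T).trace = sqrtTr A B

/-- Squared Bures–Wasserstein distance. -/
noncomputable def W2sq {n : ℕ} (A B : Matrix (Fin n) (Fin n) ℝ) : ℝ :=
  A.trace + B.trace - 2 * sqrtTr A B

theorem LinearMap.finrank_map_add_finrank_inf_ker {K V W : Type*} [DivisionRing K]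
    [AddCommGroup V] [Module K V] [AddCommGroup W] [Module K W] (f : V →ₗ[K] W)
    (U : Submodule K V) [FiniteDimensional K U] :
    Module.finrank K (U.map f) + Module.finrank K ↥(U ⊓ LinearMap.ker f) = Module.finrank K U := by
  have h := LinearMap.finrank_range_add_finrank_ker (f.domRestrict U)
  rw [LinearMap.range_domRestrict, LinearMap.ker_domRestrict] at h
  rw [← h, ← Submodule.map_comap_subtype U (LinearMap.ker f), Submodule.finrank_map_subtype_eq]

open scoped ComplexOrder

namespace Matrix

variable {m n 𝕜 : Type*} [Fintype m] [Fintype n] [RCLike 𝕜]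

theorem PosSemidef.ker_mulVecLin_conjTranspose_mul_mul {B : Matrix n n 𝕜} (hB : B.PosSemidef)
    (M : Matrix n m 𝕜) :
    LinearMap.ker (Mᴴ * B * M).mulVecLin = LinearMap.ker (B * M).mulVecLin := by
  ext x
  simp only [LinearMap.mem_ker, mulVecLin_apply, ← mulVec_mulVec]
  refine ⟨fun h ↦ ?_, fun h ↦ by rw [h, mulVec_zero]⟩
  rw [← hB.dotProduct_mulVec_zero_iff, star_mulVec, ← dotProduct_mulVec, h, dotProduct_zero]

theorem PosSemidef.rank_conjTranspose_mul_mul {B : Matrix n n 𝕜} (hB : B.PosSemidef)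
    (M : Matrix n m 𝕜) : (Mᴴ * B * M).rank = (B * M).rank := by
  have h₁ := LinearMap.finrank_range_add_finrank_ker (Mᴴ * B * M).mulVecLin
  have h₂ := LinearMap.finrank_range_add_finrank_ker (B * M).mulVecLin
  rw [hB.ker_mulVecLin_conjTranspose_mul_mul] at h₁
  exact Nat.add_right_cancel (h₁.trans h₂.symm)

theorem PosSemidef.rank_conjTranspose_mul_mul_add_finrank_inf_ker {B : Matrix n n 𝕜}
    (hB : B.PosSemidef) (M : Matrix n m 𝕜) :
    (Mᴴ * B * M).rank +
      Module.finrank 𝕜 ↥(LinearMap.range B.mulVecLin ⊓ LinearMap.ker Mᴴ.mulVecLin) = B.rank := by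
  have h_rank :
      (Mᴴ * B * M).rank = Module.finrank 𝕜 ((LinearMap.range B.mulVecLin).map Mᴴ.mulVecLin) := by
    rw [hB.rank_conjTranspose_mul_mul, ← rank_conjTranspose, conjTranspose_mul, hB.isHermitian.eq,
      rank, mulVecLin_mul, LinearMap.range_comp]
  rw [h_rank, LinearMap.finrank_map_add_finrank_inf_ker, rank]

end Matrix

section psdSqrt

variable {n : ℕ} {M : Matrix (Fin n) (Fin n) ℝ}

theorem psdSqrt_posSemidef (h : M.PosSemidef) : (psdSqrt M).PosSemidef := by
  rw [psdSqrt, dif_pos h]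
  have hD : (diagonal ((↑) ∘ (√·) ∘ h.1.eigenvalues) : Matrix (Fin n) (Fin n) ℝ).PosSemidef :=
    posSemidef_diagonal_iff.2 (fun i => by simp [Real.sqrt_nonneg])
  simpa [star_eq_conjTranspose] using hD.mul_mul_conjTranspose_same h.1.eigenvectorUnitary.1

theorem psdSqrt_mul_self (h : M.PosSemidef) : psdSqrt M * psdSqrt M = M := by
  set U := h.1.eigenvectorUnitary
  have hU : (star U.1 : Matrix (Fin n) (Fin n) ℝ) * U.1 = 1 := Unitary.coe_star_mul_self U
  conv_rhs => rw [h.1.spectral_theorem, Unitary.conjStarAlgAut_apply]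
  rw [psdSqrt, dif_pos h]
  simp only [mul_assoc]
  rw [← mul_assoc (star _) U.1, hU, one_mul, ← mul_assoc (diagonal _), diagonal_mul_diagonal]
  congr 3
  funext i
  simp [Real.mul_self_sqrt (h.eigenvalues_nonneg i)]

theorem ker_mulVecLin_psdSqrt (h : M.PosSemidef) :
    LinearMap.ker (psdSqrt M).mulVecLin = LinearMap.ker M.mulVecLin := by
  have h_ker := ker_mulVecLin_conjTranspose_mul_self (psdSqrt M)
  rw [(psdSqrt_posSemidef h).isHermitian.eq, psdSqrt_mul_self h] at h_ker
  exact h_ker.symm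

end psdSqrt

/-- For psd `A, B`:
`rank B = rank (√A·B·√A) + dim (range B ∩ ker A)`. -/
theorem stmt5 {n : ℕ} (A B : Matrix (Fin n) (Fin n) ℝ)
    (hA : A.PosSemidef) (hB : B.PosSemidef) :
    B.rank = (psdSqrt A * B * psdSqrt A).rank +
      Module.finrank ℝ ↥(LinearMap.range B.mulVecLin ⊓ LinearMap.ker A.mulVecLin) := by
  have h := hB.rank_conjTranspose_mul_mul_add_finrank_inf_ker (psdSqrt A)
  rw [(psdSqrt_posSemidef hA).isHermitian.eq, ker_mulVecLin_psdSqrt hA] at h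
  exact h.symm
end

section
/- Let A, B ∈ ℝ^{n×n} be positive semidefinite, let t ∈ [0,1], and fix any matrix G with G·Gᵀ = A. A positive semidefinite matrix C minimizes the functional C ↦ (1−t)·W₂²(A, C) + t·W₂²(B, C) over all positive semidefinite matrices if and only if there exists a matrix M with M·Mᵀ = B and Gᵀ·M positive semidefinite such that C = G_t·G_tᵀ, where G_t := (1−t)·G + t·M. In particular, the set of minimizers is nonempty and does not depend on the choice of G. -/
/-!
Every factorisation `A = G Gᵀ`, `B = M Mᵀ` gives `W₂²(A, B) ≤ ‖G - M‖²` (Frobenius norm), with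
equality iff `Gᵀ M ⪰ 0`: indeed `trace √(√A B √A) = trace √(Z Zᵀ)` for `Z = Gᵀ M`, and the polar
decomposition `Z = S O` shows `trace Z ≤ trace √(Z Zᵀ)`, with equality iff `Z ⪰ 0`. For fixed `G`
such an aligned `M` always exists. Writing `D = H Hᵀ` with `H` aligned to `G` and `M` aligned to
`H`, the identity `(1-t)‖G - H‖² + t‖M - H‖² = ‖H - G_t‖² + t(1-t)‖G - M‖²` shows that the cost
of `D` is at least `t(1-t) W₂²(A, B)`, with equality iff `H = G_t` and (for `0 < t < 1`)
`Gᵀ M ⪰ 0`; the matrices `G_t G_tᵀ` attain the bound.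
-/

open Matrix

open Filter Topology

section PolarDecomposition

variable {ι : Type*}

lemma Matrix.PosSemidef.transpose_eq_self {S : Matrix ι ι ℝ} (hS : S.PosSemidef) : Sᵀ = S := by
  rw [← conjTranspose_eq_transpose_of_trivial]; exact hS.1

variable [Fintype ι]

lemma posSemidef_mul_transpose_self {m : Type*} [Fintype m] (X : Matrix ι m ℝ) :
    (X * Xᵀ).PosSemidef := by
  simpa using posSemidef_self_mul_conjTranspose X

lemma isClosed_setOf_posSemidef : IsClosed {M : Matrix ι ι ℝ | M.PosSemidef} := by
  have h : {M : Matrix ι ι ℝ | M.PosSemidef} =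
      {M | Mᴴ = M} ∩ ⋂ x : ι → ℝ, {M | 0 ≤ star x ⬝ᵥ (M *ᵥ x)} := by
    ext M
    simp [posSemidef_iff_dotProduct_mulVec, IsHermitian]
  rw [h]
  exact (isClosed_eq continuous_id.matrix_conjTranspose continuous_id).inter
    (isClosed_iInter fun x => isClosed_le continuous_const
      (continuous_const.dotProduct (continuous_id.matrix_mulVec continuous_const)))

variable [DecidableEq ι]

lemma isCompact_setOf_mul_transpose_eq_one : IsCompact {O : Matrix ι ι ℝ | O * Oᵀ = 1} := by
  refine (isCompact_univ_pi fun _ => isCompact_univ_pi fun _ => isCompact_Icc (a := -1) (b := 1)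
    ).of_isClosed_subset
    (isClosed_eq (continuous_id.matrix_mul continuous_id.matrix_transpose) continuous_const) ?_
  rintro (O : Matrix ι ι ℝ) (hO : O * Oᵀ = 1) i - j -
  have hU : O ∈ unitaryGroup ι ℝ := by
    rwa [mem_unitaryGroup_iff, star_eq_conjTranspose, conjTranspose_eq_transpose_of_trivial]
  exact abs_le.mp (by simpa using entry_norm_bound_of_unitary hU i j)

open scoped MatrixOrder in
lemma exists_polar_of_isUnit {N : Matrix ι ι ℝ} (hN : IsUnit N) :
    ∃ O : Matrix ι ι ℝ, O * Oᵀ = 1 ∧ (N * Oᵀ).PosSemidef := by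
  set S := CFC.sqrt (N * Nᵀ)
  have hS : S.PosSemidef := (CFC.sqrt_nonneg _).posSemidef
  have hSS : S * S = N * Nᵀ :=
    CFC.sqrt_mul_sqrt_self _ (posSemidef_mul_transpose_self N).nonneg
  have hSu : IsUnit S.det := (isUnit_iff_isUnit_det S).mp
    (isUnit_of_mul_isUnit_left (hSS ▸ hN.mul ((isUnit_transpose N).mpr hN)))
  refine ⟨S⁻¹ * N, ?_, ?_⟩
  · calc (S⁻¹ * N) * (S⁻¹ * N)ᵀ = S⁻¹ * (S * S) * S⁻¹ := by
          rw [transpose_mul, transpose_nonsing_inv, hS.transpose_eq_self, hSS]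
          simp only [Matrix.mul_assoc]
      _ = 1 := by rw [nonsing_inv_mul_cancel_left S S hSu, mul_nonsing_inv S hSu]
  · rwa [transpose_mul, transpose_nonsing_inv, hS.transpose_eq_self, ← Matrix.mul_assoc, ← hSS,
      mul_nonsing_inv_cancel_right S S hSu]

lemma isClosed_setOf_exists_polar :
    IsClosed {N : Matrix ι ι ℝ | ∃ O, O * Oᵀ = 1 ∧ (N * Oᵀ).PosSemidef} := by
  let K := {O : Matrix ι ι ℝ // O * Oᵀ = 1}
  have : CompactSpace K := isCompact_iff_compactSpace.mp isCompact_setOf_mul_transpose_eq_one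
  have hQ : IsClosed {p : Matrix ι ι ℝ × K | (p.1 * (p.2 : Matrix ι ι ℝ)ᵀ).PosSemidef} :=
    isClosed_setOf_posSemidef.preimage
      (continuous_fst.matrix_mul (continuous_subtype_val.comp continuous_snd).matrix_transpose)
  convert isClosedMap_fst_of_compactSpace _ hQ using 1
  ext N
  simp [K]

lemma eventually_isUnit_add_smul_one (M : Matrix ι ι ℝ) :
    ∀ᶠ ε in 𝓝[≠] (0 : ℝ), IsUnit (M + ε • 1) := by
  have hfin : (-spectrum ℝ M).Finite := (Matrix.finite_spectrum M).neg
  filter_upwards [by simpa using nhdsNE_of_nhdsNE_sdiff_finite univ_mem hfin.to_subtype] with ε hε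
  have := (spectrum.notMem_iff.mp (by simpa using hε : -ε ∉ spectrum ℝ M)).neg
  rwa [neg_sub, Algebra.algebraMap_eq_smul_one, neg_smul, sub_neg_eq_add] at this

/-- Singular matrices are limits of invertible ones, and polar decompositions pass to the limit
because the orthogonal group is compact. -/
lemma exists_polar (M : Matrix ι ι ℝ) :
    ∃ O : Matrix ι ι ℝ, O * Oᵀ = 1 ∧ (M * Oᵀ).PosSemidef := by
  have hlim : Tendsto (fun ε : ℝ => M + ε • 1) (𝓝[≠] 0) (𝓝 M) := by
    have : Continuous fun ε : ℝ => M + ε • (1 : Matrix ι ι ℝ) := by fun_prop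
    simpa using (this.tendsto 0).mono_left nhdsWithin_le_nhds
  exact isClosed_setOf_exists_polar.mem_of_tendsto hlim
    ((eventually_isUnit_add_smul_one M).mono fun _ => exists_polar_of_isUnit)

lemma two_mul_trace_sub_trace_mul_eq {S O : Matrix ι ι ℝ} (hS : Sᵀ = S) (hO : O * Oᵀ = 1) :
    2 * (S.trace - (S * O).trace) = ((1 - O)ᵀ * S * (1 - O)).trace := by
  have h1 : (Oᵀ * S).trace = (S * O).trace := by
    rw [← trace_transpose, transpose_mul, transpose_transpose, hS]
  have h2 : (Oᵀ * S * O).trace = S.trace := by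
    rw [trace_mul_comm, ← Matrix.mul_assoc, hO, Matrix.one_mul]
  simp only [transpose_sub, transpose_one, Matrix.sub_mul, Matrix.mul_sub, Matrix.one_mul,
    Matrix.mul_one, trace_sub, h1, h2]
  ring

lemma Matrix.PosSemidef.trace_mul_le_trace {S O : Matrix ι ι ℝ} (hS : S.PosSemidef)
    (hO : O * Oᵀ = 1) : (S * O).trace ≤ S.trace := by
  have := two_mul_trace_sub_trace_mul_eq hS.transpose_eq_self hO
  have hpsd := hS.conjTranspose_mul_mul_same (1 - O)
  simp only [conjTranspose_eq_transpose_of_trivial] at hpsd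
  linarith [hpsd.trace_nonneg]

open scoped MatrixOrder in
lemma Matrix.PosSemidef.mul_eq_self_of_trace_mul_eq {S O : Matrix ι ι ℝ} (hS : S.PosSemidef)
    (hO : O * Oᵀ = 1) (h : (S * O).trace = S.trace) : S * O = S := by
  have hzero : ((1 - O)ᵀ * S * (1 - O)).trace = 0 := by
    rw [← two_mul_trace_sub_trace_mul_eq hS.transpose_eq_self hO, h, sub_self, mul_zero]
  obtain ⟨R, rfl⟩ := CStarAlgebra.nonneg_iff_eq_star_mul_self.mp hS.nonneg
  have hR : R * (1 - O) = 0 := by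
    rw [← trace_conjTranspose_mul_self_eq_zero_iff, ← hzero]
    simp only [transpose_mul, star_eq_conjTranspose, conjTranspose_eq_transpose_of_trivial,
      Matrix.mul_assoc]
  calc star R * R * O = star R * R - star R * (R * (1 - O)) := by
        simp only [Matrix.mul_sub, Matrix.mul_one, Matrix.mul_assoc, sub_sub_cancel]
    _ = star R * R := by rw [hR, Matrix.mul_zero, sub_zero]

end PolarDecomposition

section FrobeniusDistance

variable {m ι : Type*} [Fintype m] [Fintype ι]

def frobDistSq (X Y : Matrix m ι ℝ) : ℝ := ∑ i, ∑ j, (X i j - Y i j) ^ 2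

lemma frobDistSq_nonneg (X Y : Matrix m ι ℝ) : 0 ≤ frobDistSq X Y := by
  unfold frobDistSq; positivity

lemma frobDistSq_eq_zero_iff {X Y : Matrix m ι ℝ} : frobDistSq X Y = 0 ↔ X = Y := by
  simp only [frobDistSq, Finset.sum_eq_zero_iff_of_nonneg (fun _ _ => Finset.sum_nonneg
    fun _ _ => sq_nonneg _), Finset.sum_eq_zero_iff_of_nonneg (fun _ _ => sq_nonneg _),
    Finset.mem_univ, forall_const, pow_eq_zero_iff two_ne_zero, sub_eq_zero, ← Matrix.ext_iff]

lemma frobDistSq_eq_trace (X Y : Matrix m ι ℝ) :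
    frobDistSq X Y = (X * Xᵀ).trace + (Y * Yᵀ).trace - 2 * (Xᵀ * Y).trace := by
  simp only [frobDistSq, trace, diag, mul_apply, transpose_apply, Finset.mul_sum]
  rw [Finset.sum_comm (s := (Finset.univ : Finset ι)), ← Finset.sum_add_distrib,
    ← Finset.sum_sub_distrib]
  refine Finset.sum_congr rfl fun _ _ => ?_
  rw [← Finset.sum_add_distrib, ← Finset.sum_sub_distrib]
  exact Finset.sum_congr rfl fun _ _ => by ring

lemma interpolate_frobDistSq (t : ℝ) (G H M : Matrix m ι ℝ) :
    (1 - t) * frobDistSq G H + t * frobDistSq M H =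
      frobDistSq H ((1 - t) • G + t • M) + t * (1 - t) * frobDistSq G M := by
  simp only [frobDistSq, Matrix.add_apply, Matrix.smul_apply, smul_eq_mul, Finset.mul_sum,
    ← Finset.sum_add_distrib]
  exact Finset.sum_congr rfl fun _ _ => Finset.sum_congr rfl fun _ _ => by ring

end FrobeniusDistance

section BuresWasserstein

variable {n : ℕ}

open scoped MatrixOrder in
lemma psdSqrt_eq_cfcSqrt {P : Matrix (Fin n) (Fin n) ℝ} (hP : P.PosSemidef) :
    psdSqrt P = CFC.sqrt P := by
  rw [psdSqrt, dif_pos hP, CFC.sqrt_eq_cfc, cfc_nnreal_eq_real _ P hP.nonneg, hP.1.cfc_eq,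
    IsHermitian.cfc, Unitary.conjStarAlgAut_apply]
  simp [Function.comp_def, max_eq_left (hP.eigenvalues_nonneg _)]

open scoped MatrixOrder in
lemma psdSqrt_posSemidef_s11 {P : Matrix (Fin n) (Fin n) ℝ} (hP : P.PosSemidef) :
    (psdSqrt P).PosSemidef := by
  rw [psdSqrt_eq_cfcSqrt hP]; exact (CFC.sqrt_nonneg P).posSemidef

open scoped MatrixOrder in
lemma psdSqrt_mul_self_s11 {P : Matrix (Fin n) (Fin n) ℝ} (hP : P.PosSemidef) :
    psdSqrt P * psdSqrt P = P := by
  rw [psdSqrt_eq_cfcSqrt hP]; exact CFC.sqrt_mul_sqrt_self P hP.nonneg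

open scoped MatrixOrder in
lemma psdSqrt_eq_of_mul_self {P S : Matrix (Fin n) (Fin n) ℝ} (hS : S.PosSemidef)
    (h : S * S = P) : psdSqrt P = S := by
  have hP : P.PosSemidef := by rw [← h, ← pow_two]; exact hS.pow 2
  rw [psdSqrt_eq_cfcSqrt hP]
  exact CFC.sqrt_unique h hS.nonneg

lemma psdSqrt_mul_transpose_eq {M O : Matrix (Fin n) (Fin n) ℝ} (hO : O * Oᵀ = 1)
    (hMO : (M * Oᵀ).PosSemidef) : psdSqrt (M * Mᵀ) = M * Oᵀ := by
  refine psdSqrt_eq_of_mul_self hMO ?_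
  calc M * Oᵀ * (M * Oᵀ) = M * Oᵀ * (M * Oᵀ)ᵀ := by rw [hMO.transpose_eq_self]
    _ = M * (Oᵀ * O) * Mᵀ := by simp only [transpose_mul, transpose_transpose, Matrix.mul_assoc]
    _ = M * Mᵀ := by rw [mul_eq_one_comm.mp hO, Matrix.mul_one]

lemma trace_psdSqrt_mul_transpose_comm (M : Matrix (Fin n) (Fin n) ℝ) :
    (psdSqrt (M * Mᵀ)).trace = (psdSqrt (Mᵀ * M)).trace := by
  obtain ⟨O, hO, hMO⟩ := exists_polar M
  have hMO' : (Mᵀ * O).PosSemidef := by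
    have hconj : Mᵀ * O = Oᵀ * (M * Oᵀ) * O := by
      conv_rhs => rw [← hMO.transpose_eq_self]
      simp only [transpose_mul, transpose_transpose, ← Matrix.mul_assoc, mul_eq_one_comm.mp hO,
        Matrix.one_mul]
    rw [hconj]
    simpa using hMO.conjTranspose_mul_mul_same O
  have h := psdSqrt_mul_transpose_eq (M := Mᵀ) (O := Oᵀ)
    (by rw [transpose_transpose, mul_eq_one_comm.mp hO]) (by rwa [transpose_transpose])
  rw [transpose_transpose, transpose_transpose] at h
  rw [psdSqrt_mul_transpose_eq hO hMO, h, ← trace_transpose, transpose_mul, transpose_transpose,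
    trace_mul_comm]

lemma sqrtTr_eq_trace_psdSqrt {P Q X Y : Matrix (Fin n) (Fin n) ℝ} (hX : X * Xᵀ = P)
    (hY : Y * Yᵀ = Q) : sqrtTr P Q = (psdSqrt ((Xᵀ * Y) * (Xᵀ * Y)ᵀ)).trace := by
  have hP : P.PosSemidef := hX ▸ posSemidef_mul_transpose_self X
  set R := psdSqrt P
  have hRT : Rᵀ = R := (psdSqrt_posSemidef_s11 hP).transpose_eq_self
  calc sqrtTr P Q = (psdSqrt ((R * Y) * (R * Y)ᵀ)).trace := by
        rw [sqrtTr, ← hY, transpose_mul, hRT]; simp only [R, Matrix.mul_assoc]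
    _ = (psdSqrt ((R * Y)ᵀ * (R * Y))).trace := trace_psdSqrt_mul_transpose_comm _
    _ = (psdSqrt ((Xᵀ * Y)ᵀ * (Xᵀ * Y))).trace := by
        rw [transpose_mul, transpose_mul, hRT, transpose_transpose, Matrix.mul_assoc,
          ← Matrix.mul_assoc R, psdSqrt_mul_self_s11 hP, ← hX]
        simp only [Matrix.mul_assoc]
    _ = (psdSqrt ((Xᵀ * Y) * (Xᵀ * Y)ᵀ)).trace := (trace_psdSqrt_mul_transpose_comm _).symm

lemma trace_le_trace_psdSqrt_mul_transpose (Z : Matrix (Fin n) (Fin n) ℝ) :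
    Z.trace ≤ (psdSqrt (Z * Zᵀ)).trace := by
  obtain ⟨O, hO, hZO⟩ := exists_polar Z
  have := hZO.trace_mul_le_trace hO
  rwa [Matrix.mul_assoc, mul_eq_one_comm.mp hO, Matrix.mul_one,
    ← psdSqrt_mul_transpose_eq hO hZO] at this

lemma posSemidef_of_trace_eq_trace_psdSqrt {Z : Matrix (Fin n) (Fin n) ℝ}
    (h : Z.trace = (psdSqrt (Z * Zᵀ)).trace) : Z.PosSemidef := by
  obtain ⟨O, hO, hZO⟩ := exists_polar Z
  have hZ : Z * Oᵀ * O = Z := by rw [Matrix.mul_assoc, mul_eq_one_comm.mp hO, Matrix.mul_one]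
  rw [psdSqrt_mul_transpose_eq hO hZO] at h
  have := hZO.mul_eq_self_of_trace_mul_eq hO (by rwa [hZ])
  rw [hZ] at this
  rwa [← this] at hZO

lemma W2sq_le_frobDistSq {P Q X Y : Matrix (Fin n) (Fin n) ℝ} (hX : X * Xᵀ = P)
    (hY : Y * Yᵀ = Q) : W2sq P Q ≤ frobDistSq X Y := by
  rw [W2sq, frobDistSq_eq_trace, hX, hY, sqrtTr_eq_trace_psdSqrt hX hY]
  linarith [trace_le_trace_psdSqrt_mul_transpose (Xᵀ * Y)]

lemma frobDistSq_eq_W2sq_iff {P Q X Y : Matrix (Fin n) (Fin n) ℝ} (hX : X * Xᵀ = P)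
    (hY : Y * Yᵀ = Q) : frobDistSq X Y = W2sq P Q ↔ (Xᵀ * Y).PosSemidef := by
  rw [W2sq, frobDistSq_eq_trace, hX, hY, sqrtTr_eq_trace_psdSqrt hX hY]
  refine ⟨fun h => posSemidef_of_trace_eq_trace_psdSqrt (by linarith), fun h => ?_⟩
  rw [psdSqrt_mul_transpose_eq (O := 1) (by simp) (by simpa using h), transpose_one,
    Matrix.mul_one]

lemma exists_mul_transpose_eq_and_posSemidef (X : Matrix (Fin n) (Fin n) ℝ)
    {Q : Matrix (Fin n) (Fin n) ℝ} (hQ : Q.PosSemidef) :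
    ∃ Y, Y * Yᵀ = Q ∧ (Xᵀ * Y).PosSemidef := by
  set R := psdSqrt Q
  have hRT : Rᵀ = R := (psdSqrt_posSemidef_s11 hQ).transpose_eq_self
  obtain ⟨O, hO, hXRO⟩ := exists_polar (Xᵀ * R)
  refine ⟨R * Oᵀ, ?_, by rwa [← Matrix.mul_assoc]⟩
  rw [transpose_mul, transpose_transpose, Matrix.mul_assoc, ← Matrix.mul_assoc Oᵀ,
    mul_eq_one_comm.mp hO, Matrix.one_mul, hRT, psdSqrt_mul_self_s11 hQ]

noncomputable def baryCost (t : ℝ) (A B D : Matrix (Fin n) (Fin n) ℝ) : ℝ :=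
  (1 - t) * W2sq A D + t * W2sq B D

variable {t : ℝ} {A B G : Matrix (Fin n) (Fin n) ℝ}

lemma baryCost_eq {D H M : Matrix (Fin n) (Fin n) ℝ} (hG : G * Gᵀ = A) (hH : H * Hᵀ = D)
    (hM : M * Mᵀ = B) (hGH : (Gᵀ * H).PosSemidef) (hHM : (Hᵀ * M).PosSemidef) :
    baryCost t A B D = frobDistSq H ((1 - t) • G + t • M) + t * (1 - t) * frobDistSq G M := by
  have hMH : (Mᵀ * H).PosSemidef := by simpa using hHM.transpose
  rw [baryCost, ← (frobDistSq_eq_W2sq_iff hG hH).mpr hGH, ← (frobDistSq_eq_W2sq_iff hM hH).mpr hMH,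
    interpolate_frobDistSq]

lemma mul_W2sq_le_baryCost {D : Matrix (Fin n) (Fin n) ℝ} (ht0 : 0 ≤ t) (ht1 : t ≤ 1)
    (hG : G * Gᵀ = A) (hB : B.PosSemidef) (hD : D.PosSemidef) :
    t * (1 - t) * W2sq A B ≤ baryCost t A B D := by
  obtain ⟨H, hH, hGH⟩ := exists_mul_transpose_eq_and_posSemidef G hD
  obtain ⟨M, hM, hHM⟩ := exists_mul_transpose_eq_and_posSemidef H hB
  rw [baryCost_eq hG hH hM hGH hHM]
  have := mul_le_mul_of_nonneg_left (W2sq_le_frobDistSq hG hM)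
    (mul_nonneg ht0 (sub_nonneg.mpr ht1))
  linarith [frobDistSq_nonneg H ((1 - t) • G + t • M)]

lemma baryCost_interpolant {M : Matrix (Fin n) (Fin n) ℝ} (ht0 : 0 ≤ t) (ht1 : t ≤ 1)
    (hG : G * Gᵀ = A) (hM : M * Mᵀ = B) (hGM : (Gᵀ * M).PosSemidef) :
    baryCost t A B (((1 - t) • G + t • M) * ((1 - t) • G + t • M)ᵀ) = t * (1 - t) * W2sq A B := by
  set K := (1 - t) • G + t • M
  refine le_antisymm ?_ (mul_W2sq_le_baryCost ht0 ht1 hG (hM ▸ posSemidef_mul_transpose_self M)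
    (posSemidef_mul_transpose_self K))
  calc baryCost t A B (K * Kᵀ) ≤ (1 - t) * frobDistSq G K + t * frobDistSq M K :=
        add_le_add (mul_le_mul_of_nonneg_left (W2sq_le_frobDistSq hG rfl) (sub_nonneg.mpr ht1))
          (mul_le_mul_of_nonneg_left (W2sq_le_frobDistSq hM rfl) ht0)
    _ = t * (1 - t) * frobDistSq G M := by
        rw [interpolate_frobDistSq, frobDistSq_eq_zero_iff.mpr rfl, zero_add]
    _ = t * (1 - t) * W2sq A B := by rw [(frobDistSq_eq_W2sq_iff hG hM).mpr hGM]

lemma exists_interpolant_of_baryCost_le {C : Matrix (Fin n) (Fin n) ℝ} (ht0 : 0 ≤ t)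
    (ht1 : t ≤ 1) (hG : G * Gᵀ = A) (hB : B.PosSemidef) (hC : C.PosSemidef)
    (h : baryCost t A B C ≤ t * (1 - t) * W2sq A B) :
    ∃ M, M * Mᵀ = B ∧ (Gᵀ * M).PosSemidef ∧
      C = ((1 - t) • G + t • M) * ((1 - t) • G + t • M)ᵀ := by
  obtain ⟨H, rfl, hGH⟩ := exists_mul_transpose_eq_and_posSemidef G hC
  obtain ⟨M, hM, hHM⟩ := exists_mul_transpose_eq_and_posSemidef H hB
  rw [baryCost_eq hG rfl hM hGH hHM] at h
  have hgap := mul_le_mul_of_nonneg_left (W2sq_le_frobDistSq hG hM)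
    (mul_nonneg ht0 (sub_nonneg.mpr ht1))
  have hdist := frobDistSq_nonneg H ((1 - t) • G + t • M)
  obtain rfl : H = (1 - t) • G + t • M := frobDistSq_eq_zero_iff.mp (by linarith)
  rcases eq_or_ne (t * (1 - t)) 0 with ht | ht
  · -- at `t = 0` or `t = 1` the interpolant does not depend on `M`, so any aligned `M₀` will do
    obtain ⟨M₀, hM₀, hGM₀⟩ := exists_mul_transpose_eq_and_posSemidef G hB
    refine ⟨M₀, hM₀, hGM₀, ?_⟩
    rcases mul_eq_zero.mp ht with rfl | ht
    · simp
    · obtain rfl : t = 1 := by linarith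
      simp [hM, hM₀]
  · refine ⟨M, hM, (frobDistSq_eq_W2sq_iff hG hM).mp (mul_left_cancel₀ ht (by linarith)), rfl⟩

end BuresWasserstein

theorem stmt11_general {n : ℕ} (A B : Matrix (Fin n) (Fin n) ℝ)
    (hB : B.PosSemidef)
    (t : ℝ) (ht0 : 0 ≤ t) (ht1 : t ≤ 1)
    (G : Matrix (Fin n) (Fin n) ℝ) (hG : G * Gᵀ = A) :
    (∀ C : Matrix (Fin n) (Fin n) ℝ, C.PosSemidef →
        ((∀ D : Matrix (Fin n) (Fin n) ℝ, D.PosSemidef →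
            (1 - t) * W2sq A C + t * W2sq B C ≤ (1 - t) * W2sq A D + t * W2sq B D) ↔
          ∃ M : Matrix (Fin n) (Fin n) ℝ, M * Mᵀ = B ∧ (Gᵀ * M).PosSemidef ∧
            C = ((1 - t) • G + t • M) * ((1 - t) • G + t • M)ᵀ)) ∧
      ∃ C : Matrix (Fin n) (Fin n) ℝ, C.PosSemidef ∧
        ∀ D : Matrix (Fin n) (Fin n) ℝ, D.PosSemidef →
          (1 - t) * W2sq A C + t * W2sq B C ≤ (1 - t) * W2sq A D + t * W2sq B D := by
  obtain ⟨M₀, hM₀, hGM₀⟩ := exists_mul_transpose_eq_and_posSemidef G hB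
  set K₀ := (1 - t) • G + t • M₀
  have hK₀ : baryCost t A B (K₀ * K₀ᵀ) = t * (1 - t) * W2sq A B :=
    baryCost_interpolant ht0 ht1 hG hM₀ hGM₀
  have hlower (D : Matrix (Fin n) (Fin n) ℝ) (hD : D.PosSemidef) :
      t * (1 - t) * W2sq A B ≤ baryCost t A B D :=
    mul_W2sq_le_baryCost ht0 ht1 hG hB hD
  refine ⟨fun C hC => ⟨fun hmin => ?_, ?_⟩, K₀ * K₀ᵀ, posSemidef_mul_transpose_self K₀,
    fun D hD => hK₀.trans_le (hlower D hD)⟩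
  · exact exists_interpolant_of_baryCost_le ht0 ht1 hG hB hC
      ((hmin _ (posSemidef_mul_transpose_self K₀)).trans_eq hK₀)
  · rintro ⟨M, hM, hGM, rfl⟩ D hD
    exact (baryCost_interpolant ht0 ht1 hG hM hGM).trans_le (hlower D hD)

/-- Fix a Green's matrix `G` of `A` and `t ∈ [0,1]`. A psd matrix `C`
minimizes `C ↦ (1−t)·W₂²(A,C) + t·W₂²(B,C)` iff `C = G_t·G_tᵀ` with
`G_t = (1−t)·G + t·M` for some `M` with `M·Mᵀ = B` and `Gᵀ·M ⪰ 0`. In particular the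
set of minimizers is nonempty (and, by the equivalence, independent of the choice of `G`). -/
theorem stmt11 {n : ℕ} (A B : Matrix (Fin n) (Fin n) ℝ)
    (hA : A.PosSemidef) (hB : B.PosSemidef)
    (t : ℝ) (ht0 : 0 ≤ t) (ht1 : t ≤ 1)
    (G : Matrix (Fin n) (Fin n) ℝ) (hG : G * Gᵀ = A) :
    (∀ C : Matrix (Fin n) (Fin n) ℝ, C.PosSemidef →
        ((∀ D : Matrix (Fin n) (Fin n) ℝ, D.PosSemidef →
            (1 - t) * W2sq A C + t * W2sq B C ≤ (1 - t) * W2sq A D + t * W2sq B D) ↔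
          ∃ M : Matrix (Fin n) (Fin n) ℝ, M * Mᵀ = B ∧ (Gᵀ * M).PosSemidef ∧
            C = ((1 - t) • G + t • M) * ((1 - t) • G + t • M)ᵀ)) ∧
      ∃ C : Matrix (Fin n) (Fin n) ℝ, C.PosSemidef ∧
        ∀ D : Matrix (Fin n) (Fin n) ℝ, D.PosSemidef →
          (1 - t) * W2sq A C + t * W2sq B C ≤ (1 - t) * W2sq A D + t * W2sq B D :=
  stmt11_general A B hB t ht0 ht1 G hG
end
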